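/- Suppose ⟨·,·⟩ is a nondegenerate symmetric bilinear form on E, W₁ = V₁^⊥, W₂ = V₂^⊥, and E = F_e (where F_e is formed from V₁, V₂, W₁, W₂). Let R be a formal curvature tensor on E such that every operator R(x,y) preserves V₁ and V₂ and is skew-adjoint with respect to ⟨·,·⟩ (⟨R(x,y)z, t⟩ + ⟨z, R(x,y)t⟩ = 0 for all x, y, z, t ∈ E). Then R(x,y) = 0 for all x, y ∈ V₁, and R(x',y') = 0 for all x', y' ∈ V₂. -/

import Mathlib

open Submodule

/-- For a permutation `σ` of `{1,2}`, the increasing sequence of subspaces `F_σ(n)`: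
`F_σ(0) = ⊥`, `F_σ(n+1) = Σ_i (F_σ(n) + Vᵢ) ⊓ (F_σ(n) + W_{σ(i)})`. -/
noncomputable def Fsig {K E : Type*} [Field K] [AddCommGroup E] [Module K E]
    (V W : Fin 2 → Submodule K E) (σ : Equiv.Perm (Fin 2)) : ℕ → Submodule K E
  | 0 => ⊥
  | n + 1 => ⨆ i : Fin 2, (Fsig V W σ n ⊔ V i) ⊓ (Fsig V W σ n ⊔ W (σ i))

/-!
If `x, y ∈ Vᵢ`, the Bianchi identity writes `R(x,y)z` for `z ∈ Vⱼ` as `-(R(y,z)x + R(z,x)y) ∈ Vᵢ`,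
so `R(x,y)` kills `Vⱼ` and maps `E = Vᵢ ⊕ Vⱼ` into `Vᵢ`. By skew-adjointness, for every `z` the
functional `⟨R(x,y)z, ·⟩` then vanishes on `Vⱼ`, and on `Wᵢ = Vᵢ^⊥` since `R(x,y)z ∈ Vᵢ`. Any
subspace containing, for each `k`, either `Vₖ` or `Wₖ` contains every `F_e(n)`, so this functional
vanishes on `F_e = E`, and nondegeneracy gives `R(x,y)z = 0`.
-/

section

variable {K E : Type*} [Field K] [AddCommGroup E] [Module K E]

theorem Fsig_le_of_forall {V W : Fin 2 → Submodule K E} {σ : Equiv.Perm (Fin 2)}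
    {U : Submodule K E} (hU : ∀ k, V k ≤ U ∨ W (σ k) ≤ U) (n : ℕ) : Fsig V W σ n ≤ U := by
  induction n with
  | zero => exact bot_le
  | succ n ih =>
    refine iSup_le fun k => ?_
    rcases hU k with hV | hW
    · exact inf_le_left.trans (sup_le ih hV)
    · exact inf_le_right.trans (sup_le ih hW)

theorem iSup_Fsig_le_of_forall {V W : Fin 2 → Submodule K E} {σ : Equiv.Perm (Fin 2)}
    {U : Submodule K E} (hU : ∀ k, V k ≤ U ∨ W (σ k) ≤ U) : ⨆ n, Fsig V W σ n ≤ U :=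
  iSup_le (Fsig_le_of_forall hU)

theorem eq_zero_of_mem_of_forall_apply_eq_zero (B : LinearMap.BilinForm K E)
    (hB : B.Nondegenerate) {V W : Fin 2 → Submodule K E}
    (hW : ∀ k, W k = B.orthogonal (V k)) (hFe : ⨆ n, Fsig V W 1 n = ⊤)
    {i j : Fin 2} (hij : i ≠ j) {u : E} (hu : u ∈ V i) (huj : ∀ t ∈ V j, B u t = 0) :
    u = 0 := by
  have hWi : W i ≤ LinearMap.ker (B u) := fun t ht => by
    rw [hW] at ht
    exact (LinearMap.BilinForm.mem_orthogonal_iff.mp ht) u hu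
  have hker : LinearMap.ker (B u) = ⊤ := by
    refine top_unique (hFe ▸ iSup_Fsig_le_of_forall fun k => ?_)
    obtain rfl | rfl : k = i ∨ k = j := by omega
    · exact Or.inr hWi
    · exact Or.inl huj
  exact hB.1 u fun t => LinearMap.mem_ker.mp (hker ▸ mem_top)

theorem LinearMap.eq_zero_of_skew_of_mapsTo_of_le_ker (B : LinearMap.BilinForm K E)
    (hB : B.Nondegenerate) {V W : Fin 2 → Submodule K E}
    (hW : ∀ k, W k = B.orthogonal (V k)) (hFe : ⨆ n, Fsig V W 1 n = ⊤)
    {i j : Fin 2} (hij : i ≠ j) (hsup : V i ⊔ V j = ⊤) {A : E →ₗ[K] E}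
    (hAi : ∀ z ∈ V i, A z ∈ V i) (hAj : ∀ z ∈ V j, A z = 0)
    (hskew : ∀ z t, B (A z) t + B z (A t) = 0) : A = 0 := by
  ext z
  refine eq_zero_of_mem_of_forall_apply_eq_zero B hB hW hFe hij ?_ fun t ht => ?_
  · obtain ⟨a, ha, b, hb, rfl⟩ := mem_sup.mp (hsup ▸ mem_top : z ∈ V i ⊔ V j)
    simpa [hAj b hb] using hAi a ha
  · simpa [hAj t ht] using hskew z t

theorem curvature_apply_eq_zero_of_disjoint {R : E →ₗ[K] E →ₗ[K] Module.End K E}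
    (hbianchi : ∀ x y z : E, R x y z + R y z x + R z x y = 0)
    {P Q : Submodule K E} (hPQ : Disjoint P Q)
    (hP : ∀ x y, ∀ z ∈ P, R x y z ∈ P) (hQ : ∀ x y, ∀ z ∈ Q, R x y z ∈ Q)
    {x y z : E} (hx : x ∈ P) (hy : y ∈ P) (hz : z ∈ Q) : R x y z = 0 := by
  have hRP : R x y z ∈ P := by
    have h := hbianchi x y z
    rw [add_assoc, add_eq_zero_iff_eq_neg] at h
    rw [h]
    exact neg_mem (add_mem (hP y z x hx) (hP z x y hy))
  exact disjoint_def.mp hPQ _ hRP (hQ x y z hz)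

theorem curvature_eq_zero_of_isCompl (B : LinearMap.BilinForm K E) (hB : B.Nondegenerate)
    {V W : Fin 2 → Submodule K E} (hW : ∀ k, W k = B.orthogonal (V k))
    (hFe : ⨆ n, Fsig V W 1 n = ⊤) {i j : Fin 2} (hij : i ≠ j) (hV : IsCompl (V i) (V j))
    {R : E →ₗ[K] E →ₗ[K] Module.End K E}
    (hbianchi : ∀ x y z : E, R x y z + R y z x + R z x y = 0)
    (hpres : ∀ (x y : E) (k : Fin 2), ∀ z ∈ V k, R x y z ∈ V k)
    (hskew : ∀ x y z t : E, B (R x y z) t + B z (R x y t) = 0) :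
    ∀ x ∈ V i, ∀ y ∈ V i, R x y = 0 := fun x hx y hy =>
  LinearMap.eq_zero_of_skew_of_mapsTo_of_le_ker B hB hW hFe hij hV.sup_eq_top
    (hpres x y i) (fun _ hz => curvature_apply_eq_zero_of_disjoint hbianchi hV.disjoint
      (fun x y => hpres x y i) (fun x y => hpres x y j) hx hy hz) (hskew x y)

end

theorem stmt18_general {K E : Type*} [Field K] [AddCommGroup E] [Module K E]
    (B : LinearMap.BilinForm K E) (hBnd : B.Nondegenerate)
    (V : Fin 2 → Submodule K E) (hV : IsCompl (V 0) (V 1))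
    (W : Fin 2 → Submodule K E) (hWdef : ∀ i, W i = B.orthogonal (V i))
    (hFe : (⨆ n : ℕ, Fsig V W 1 n) = ⊤)
    (R : E →ₗ[K] E →ₗ[K] Module.End K E)
    (hbianchi : ∀ x y z : E, R x y z + R y z x + R z x y = 0)
    (hpres : ∀ (x y : E) (i : Fin 2), ∀ z ∈ V i, R x y z ∈ V i)
    (hskew : ∀ x y z t : E, B (R x y z) t + B z (R x y t) = 0) :
    (∀ x ∈ V 0, ∀ y ∈ V 0, R x y = 0) ∧
    (∀ x ∈ V 1, ∀ y ∈ V 1, R x y = 0) :=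
  ⟨curvature_eq_zero_of_isCompl B hBnd hWdef hFe (by decide) hV hbianchi hpres hskew,
    curvature_eq_zero_of_isCompl B hBnd hWdef hFe (by decide) hV.symm hbianchi hpres hskew⟩

/-- If `⟨·,·⟩` is nondegenerate symmetric, `Wᵢ = Vᵢ^⊥`, `E = F_e`, and `R` is a formal
curvature tensor whose operators preserve `V₁` and `V₂` and are skew-adjoint, then
`R(x,y) = 0` for `x, y ∈ V₁` and `R(x',y') = 0` for `x', y' ∈ V₂`. -/
theorem stmt18 {K E : Type*} [Field K] [AddCommGroup E] [Module K E]
    [FiniteDimensional K E] (hchar : (2 : K) ≠ 0)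
    (B : LinearMap.BilinForm K E) (hBnd : B.Nondegenerate) (hBsymm : B.IsSymm)
    (V : Fin 2 → Submodule K E) (hV : IsCompl (V 0) (V 1))
    (W : Fin 2 → Submodule K E) (hWdef : ∀ i, W i = B.orthogonal (V i))
    (hFe : (⨆ n : ℕ, Fsig V W 1 n) = ⊤)
    (R : E →ₗ[K] E →ₗ[K] Module.End K E)
    (hanti : ∀ x y : E, R x y = - R y x)
    (hbianchi : ∀ x y z : E, R x y z + R y z x + R z x y = 0)
    (hpres : ∀ (x y : E) (i : Fin 2), ∀ z ∈ V i, R x y z ∈ V i)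
    (hskew : ∀ x y z t : E, B (R x y z) t + B z (R x y t) = 0) :
    (∀ x ∈ V 0, ∀ y ∈ V 0, R x y = 0) ∧
    (∀ x ∈ V 1, ∀ y ∈ V 1, R x y = 0) :=
  stmt18_general B hBnd V hV W hWdef hFe R hbianchi hpres hskew
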